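/- arXiv:1605.02200 — 3 statements merged into one kernel-verified Lean document; each statement's English description precedes it below -/
import Mathlib

section
/- Let W_1,…,W_K be subspaces of 𝔽^d with weights w_1,…,w_K > 0 and fusion frame operator S = Σ_{k=1}^K w_k² π_{W_k}, and suppose (W, w) ∈ ℰ. Let λ be an eigenvalue of S with eigenspace E = ker(S − λ·I). Then the family {(W_k, w_k) : W_k ⊆ E} is a λ-tight fusion frame for E; that is, W_k ⊆ E for every k in the index set I = {k : S π_{W_k} = λ π_{W_k}}, and Σ_{k ∈ I} w_k² π_{W_k} f = λ f for every f ∈ E. -/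
open scoped BigOperators Classical

/-- The orthogonal projection onto a subspace `W` of `𝔽^d`, as an endomorphism. -/
noncomputable def projL {𝕜 : Type*} [RCLike 𝕜] {d : ℕ}
    (W : Submodule 𝕜 (EuclideanSpace 𝕜 (Fin d))) :
    EuclideanSpace 𝕜 (Fin d) →ₗ[𝕜] EuclideanSpace 𝕜 (Fin d) :=
  W.subtype ∘ₗ (W.orthogonalProjection).toLinearMap

/-- The fusion frame operator `S = Σ w_k² π_{W_k}`. -/
noncomputable def fusionOp {𝕜 : Type*} [RCLike 𝕜] {d K : ℕ}
    (w : Fin K → ℝ) (W : Fin K → Submodule 𝕜 (EuclideanSpace 𝕜 (Fin d))) :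
    EuclideanSpace 𝕜 (Fin d) →ₗ[𝕜] EuclideanSpace 𝕜 (Fin d) :=
  ∑ k, ((w k : 𝕜) ^ 2) • projL (W k)

/-- `(W, w) ∈ ℰ`: every projection `π_{W_k}` is an eigenoperator of `S`. -/
def MemE {𝕜 : Type*} [RCLike 𝕜] {d K : ℕ}
    (w : Fin K → ℝ) (W : Fin K → Submodule 𝕜 (EuclideanSpace 𝕜 (Fin d))) : Prop :=
  ∀ k, ∃ μ : ℝ, Module.End.HasEigenvalue (fusionOp w W) (μ : 𝕜) ∧
    fusionOp w W ∘ₗ projL (W k) = (μ : 𝕜) • projL (W k)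

/-!
If `S π_{W_k} = μ π_{W_k}` then `W_k` lies in the `μ`-eigenspace of `S`. Since `S` is self-adjoint,
its eigenspaces for distinct eigenvalues are orthogonal, so for `f` in the `λ`-eigenspace every
`π_{W_k} f` with `k ∉ I` vanishes, and `Σ_{k ∈ I} w_k² π_{W_k} f = S f = λ f`.
-/

section

variable {𝕜 : Type*} [RCLike 𝕜] {d : ℕ}

lemma projL_apply_of_mem {V : Submodule 𝕜 (EuclideanSpace 𝕜 (Fin d))}
    {x : EuclideanSpace 𝕜 (Fin d)} (hx : x ∈ V) : projL V x = x :=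
  V.starProjection_eq_self_iff.mpr hx

lemma projL_apply_of_mem_orthogonal {V : Submodule 𝕜 (EuclideanSpace 𝕜 (Fin d))}
    {x : EuclideanSpace 𝕜 (Fin d)} (hx : x ∈ Vᗮ) : projL V x = 0 :=
  V.starProjection_apply_eq_zero_iff.mpr hx

lemma isSymmetric_fusionOp {K : ℕ} (w : Fin K → ℝ)
    (W : Fin K → Submodule 𝕜 (EuclideanSpace 𝕜 (Fin d))) : (fusionOp w W).IsSymmetric :=
  LinearMap.isSymmetric_sum _ fun k _ =>
    (W k).starProjection_isSymmetric.smul (by rw [← RCLike.ofReal_pow, RCLike.conj_ofReal])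

lemma le_eigenspace_of_comp_projL_eq {T : Module.End 𝕜 (EuclideanSpace 𝕜 (Fin d))} {c : 𝕜}
    {V : Submodule 𝕜 (EuclideanSpace 𝕜 (Fin d))} (h : T ∘ₗ projL V = c • projL V) :
    V ≤ T.eigenspace c := fun x hx => by
  simpa [projL_apply_of_mem hx] using LinearMap.congr_fun h x

lemma projL_apply_eq_zero_of_le_eigenspace {T : Module.End 𝕜 (EuclideanSpace 𝕜 (Fin d))}
    (hT : T.IsSymmetric) {μ ν : 𝕜} (hμν : μ ≠ ν) {V : Submodule 𝕜 (EuclideanSpace 𝕜 (Fin d))}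
    (hV : V ≤ T.eigenspace μ) {f : EuclideanSpace 𝕜 (Fin d)} (hf : f ∈ T.eigenspace ν) :
    projL V f = 0 := by
  have hortho := (hT.orthogonalFamily_eigenspaces.isOrtho hμν).mono_left hV
  exact projL_apply_of_mem_orthogonal (Submodule.isOrtho_iff_le.mp hortho.symm hf)

end

theorem stmt3_general {𝕜 : Type*} [RCLike 𝕜] {d K : ℕ}
    (w : Fin K → ℝ)
    (W : Fin K → Submodule 𝕜 (EuclideanSpace 𝕜 (Fin d)))
    (hmemE : MemE w W)
    (lam : ℝ)
    (E : Submodule 𝕜 (EuclideanSpace 𝕜 (Fin d)))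
    (hE : E = LinearMap.ker (fusionOp w W - (lam : 𝕜) • LinearMap.id))
    (I : Finset (Fin K))
    (hI : I = Finset.univ.filter
      (fun k => fusionOp w W ∘ₗ projL (W k) = (lam : 𝕜) • projL (W k))) :
    (∀ k ∈ I, W k ≤ E) ∧
      ∀ f ∈ E, ∑ k ∈ I, ((w k : 𝕜) ^ 2) • projL (W k) f = (lam : 𝕜) • f := by
  subst hE hI
  rw [← Module.End.one_eq_id, ← Module.End.eigenspace_def]
  refine ⟨fun k hk => le_eigenspace_of_comp_projL_eq (Finset.mem_filter.mp hk).2, fun f hf => ?_⟩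
  calc ∑ k ∈ Finset.univ with fusionOp w W ∘ₗ projL (W k) = (lam : 𝕜) • projL (W k),
        ((w k : 𝕜) ^ 2) • projL (W k) f
      = ∑ k, ((w k : 𝕜) ^ 2) • projL (W k) f := by
        refine Finset.sum_filter_of_ne fun k _ hk => ?_
        obtain ⟨μ, -, hμ⟩ := hmemE k
        by_cases hμlam : (μ : 𝕜) = lam
        · rwa [← hμlam]
        · have hproj := projL_apply_eq_zero_of_le_eigenspace (isSymmetric_fusionOp w W) hμlam
            (le_eigenspace_of_comp_projL_eq hμ) hf
          simp [hproj] at hk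
    _ = fusionOp w W f := by simp [fusionOp]
    _ = (lam : 𝕜) • f := Module.End.mem_eigenspace_iff.mp hf

/-- if `(W, w) ∈ ℰ` and `λ` is an eigenvalue of `S` with
eigenspace `E`, then `{(W_k, w_k) : k ∈ I}`, where
`I = {k : S π_{W_k} = λ π_{W_k}}`, is a `λ`-tight fusion frame for `E`:
`W_k ⊆ E` for every `k ∈ I` and `Σ_{k ∈ I} w_k² π_{W_k} f = λ f` for `f ∈ E`. -/
theorem stmt3 {𝕜 : Type*} [RCLike 𝕜] {d K : ℕ} (hd : 0 < d)
    (w : Fin K → ℝ) (hw : ∀ k, 0 < w k)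
    (W : Fin K → Submodule 𝕜 (EuclideanSpace 𝕜 (Fin d)))
    (hmemE : MemE w W)
    (lam : ℝ) (hlam : Module.End.HasEigenvalue (fusionOp w W) (lam : 𝕜))
    (E : Submodule 𝕜 (EuclideanSpace 𝕜 (Fin d)))
    (hE : E = LinearMap.ker (fusionOp w W - (lam : 𝕜) • LinearMap.id))
    (I : Finset (Fin K))
    (hI : I = Finset.univ.filter
      (fun k => fusionOp w W ∘ₗ projL (W k) = (lam : 𝕜) • projL (W k))) :
    (∀ k ∈ I, W k ≤ E) ∧
      ∀ f ∈ E, ∑ k ∈ I, ((w k : 𝕜) ^ 2) • projL (W k) f = (lam : 𝕜) • f :=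
  stmt3_general w W hmemE lam E hE I hI
end

section
/- Let f_1,…,f_L be an orthonormal family in 𝔽^d, let z_1,…,z_L ∈ 𝔽 satisfy |z_l| ≤ 1/2 for each l, and let h ∈ 𝔽^d be a unit vector with ⟨h, f_l⟩ = 0 for every l. For t ∈ (−1, 1) let A(t) ∈ 𝔽^{d×L} have l-th column (1 − t²|z_l|²)^{1/2} f_l + t z_l h, let F ∈ 𝔽^{d×L} have l-th column f_l, and let H ∈ 𝔽^{d×L} have l-th column z_l h. Then the matrix-valued curve t ↦ P(t) = A(t)(A(t)*A(t))^{−1}A(t)* (the orthogonal projection onto the range of A(t)) is differentiable at t = 0 with derivative P′(0) = H F* + F H*. -/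
/-!
Write `P = A G⁻¹ Aᴴ` with Gram matrix `G = Aᴴ A`. At `t = 0` we have `A = F`, `A' = H`, and
`G = Fᴴ F = 1` by orthonormality. Since `h ⊥ f_l`, `Fᴴ H = 0`, so `G' = Hᴴ F + Fᴴ H = 0` and hence
`(G⁻¹)' = -G⁻¹ G' G⁻¹ = 0`. The product rule leaves `P' = H Fᴴ + F Hᴴ`.
-/

open scoped BigOperators InnerProductSpace Matrix

attribute [local instance] Matrix.normedAddCommGroup Matrix.normedSpace

/-- The matrix `A(t)` whose `l`-th column is `(1 - t²|z_l|²)^{1/2} f_l + t z_l h`. -/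
noncomputable def Amat {𝕜 : Type*} [RCLike 𝕜] {d L : ℕ}
    (f : Fin L → EuclideanSpace 𝕜 (Fin d)) (z : Fin L → 𝕜)
    (h : EuclideanSpace 𝕜 (Fin d)) (t : ℝ) : Matrix (Fin d) (Fin L) 𝕜 :=
  Matrix.of fun i l =>
    (Real.sqrt (1 - t ^ 2 * ‖z l‖ ^ 2) : 𝕜) * f l i + (t : 𝕜) * z l * h i

/-- The orthogonal projection onto the range of `A(t)`:
`P(t) = A(t) (A(t)* A(t))⁻¹ A(t)*`. -/
noncomputable def Pmat {𝕜 : Type*} [RCLike 𝕜] {d L : ℕ}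
    (f : Fin L → EuclideanSpace 𝕜 (Fin d)) (z : Fin L → 𝕜)
    (h : EuclideanSpace 𝕜 (Fin d)) (t : ℝ) : Matrix (Fin d) (Fin d) 𝕜 :=
  Amat f z h t * ((Amat f z h t)ᴴ * Amat f z h t)⁻¹ * (Amat f z h t)ᴴ

section MatrixCalculus

open Filter

variable {𝕜 : Type*} [RCLike 𝕜] {m n p : Type*}

theorem hasDerivAt_matrix_iff [Fintype n] {A : ℝ → Matrix m n 𝕜} {A' : Matrix m n 𝕜} {t : ℝ} :
    HasDerivAt A A' t ↔ ∀ i j, HasDerivAt (fun s => A s i j) (A' i j) t :=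
  hasDerivAt_pi.trans (forall_congr' fun _ => hasDerivAt_pi)

theorem HasDerivAt.matrix_mul [Fintype n] [Fintype p] {A : ℝ → Matrix m n 𝕜} {B : ℝ → Matrix n p 𝕜}
    {A' : Matrix m n 𝕜} {B' : Matrix n p 𝕜} {t : ℝ}
    (hA : HasDerivAt A A' t) (hB : HasDerivAt B B' t) :
    HasDerivAt (fun s => A s * B s) (A' * B t + A t * B') t := by
  rw [hasDerivAt_matrix_iff] at hA hB ⊢
  intro i j
  simp only [Matrix.mul_apply, Matrix.add_apply, ← Finset.sum_add_distrib]
  exact HasDerivAt.fun_sum fun k _ => (hA i k).mul (hB k j)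

theorem HasDerivAt.matrix_conjTranspose [Fintype m] [Fintype n] {A : ℝ → Matrix m n 𝕜}
    {A' : Matrix m n 𝕜} {t : ℝ}
    (hA : HasDerivAt A A' t) : HasDerivAt (fun s => (A s)ᴴ) (A')ᴴ t := by
  rw [hasDerivAt_matrix_iff] at hA ⊢
  exact fun i j => (RCLike.conjCLE (K := 𝕜)).hasFDerivAt.comp_hasDerivAt t (hA j i)

theorem HasDerivAt.matrix_inv [Fintype n] [DecidableEq n] {G : ℝ → Matrix n n 𝕜}
    {G' : Matrix n n 𝕜} {t : ℝ} (hG : HasDerivAt G G' t) (hdet : (G t).det ≠ 0) :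
    HasDerivAt (fun s => (G s)⁻¹) (-((G t)⁻¹ * G' * (G t)⁻¹)) t := by
  have hG_cont : ContinuousAt G t := by exact hG.continuousAt
  have hdet_cont : ContinuousAt (fun s => (G s).det) t :=
    (continuous_id.matrix_det).continuousAt.comp hG_cont
  have hinv_cont : ContinuousAt (fun s => (G s)⁻¹) t := by
    refine (continuousAt_matrix_inv (G t) ?_).comp hG_cont
    rw [Ring.inverse_eq_inv']
    exact continuousAt_inv₀ hdet
  refine hasDerivAt_iff_tendsto_slope.mpr ?_
  have hslope : (fun s => -((G s)⁻¹ * slope G t s * (G t)⁻¹)) =ᶠ[nhdsWithin t {t}ᶜ]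
      slope (fun s => (G s)⁻¹) t := by
    filter_upwards [nhdsWithin_le_nhds (hdet_cont.eventually_ne hdet)] with s hs
    -- `G(s)⁻¹ - G(t)⁻¹ = G(s)⁻¹ (G t - G s) G(t)⁻¹`
    have hs_inv : (G s)⁻¹ * G s = 1 := Matrix.nonsing_inv_mul _ (Ne.isUnit hs)
    have ht_inv : G t * (G t)⁻¹ = 1 := Matrix.mul_nonsing_inv _ (Ne.isUnit hdet)
    simp only [slope_def_module, Matrix.mul_smul, Matrix.smul_mul, Matrix.mul_sub,
      Matrix.sub_mul, hs_inv, Matrix.mul_assoc, ht_inv, Matrix.mul_one, Matrix.one_mul]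
    rw [← smul_neg, neg_sub]
  have hslope_G : Tendsto (slope G t) (nhdsWithin t {t}ᶜ) (nhds G') := by
    exact hasDerivAt_iff_tendsto_slope.mp hG
  exact (((hinv_cont.mono_left nhdsWithin_le_nhds).mul hslope_G).mul tendsto_const_nhds).neg.congr'
    hslope

end MatrixCalculus

theorem conjTranspose_mul_eq_inner {𝕜 ι κ n : Type*} [RCLike 𝕜] [Fintype n]
    (u : ι → EuclideanSpace 𝕜 n) (v : κ → EuclideanSpace 𝕜 n) :
    (Matrix.of fun i l => u l i)ᴴ * Matrix.of (fun i m => v m i) =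
      Matrix.of fun l m => ⟪u l, v m⟫_𝕜 := by
  ext l m
  simp [Matrix.mul_apply, EuclideanSpace.inner_eq_star_dotProduct, dotProduct, mul_comm]

section Curve

variable {𝕜 : Type*} [RCLike 𝕜] {d L : ℕ}
  (f : Fin L → EuclideanSpace 𝕜 (Fin d)) (z : Fin L → 𝕜) (h : EuclideanSpace 𝕜 (Fin d))

theorem Amat_zero : Amat f z h 0 = Matrix.of fun i l => f l i := by
  ext i l
  simp [Amat]

theorem hasDerivAt_Amat_zero :
    HasDerivAt (Amat f z h) (Matrix.of fun i l => z l * h i) 0 := by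
  rw [hasDerivAt_matrix_iff]
  intro i l
  have hrad : HasDerivAt (fun s : ℝ => 1 - s ^ 2 * ‖z l‖ ^ 2) 0 0 := by
    simpa using ((hasDerivAt_pow 2 (0 : ℝ)).mul_const (‖z l‖ ^ 2)).const_sub 1
  have hsqrt : HasDerivAt (fun s : ℝ => Real.sqrt (1 - s ^ 2 * ‖z l‖ ^ 2)) 0 0 := by
    simpa using hrad.sqrt (by simp)
  have hsqrt𝕜 := (RCLike.ofRealCLM (K := 𝕜)).hasFDerivAt.comp_hasDerivAt 0 hsqrt
  have hcoe := (RCLike.ofRealCLM (K := 𝕜)).hasFDerivAt.comp_hasDerivAt 0 (hasDerivAt_id (0 : ℝ))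
  have := (hsqrt𝕜.mul_const (f l i)).add ((hcoe.mul_const (z l)).mul_const (h i))
  simpa [Amat, Function.comp_def, Pi.add_def] using this

end Curve

theorem stmt6_general {𝕜 : Type*} [RCLike 𝕜] {d L : ℕ}
    (f : Fin L → EuclideanSpace 𝕜 (Fin d)) (hf : Orthonormal 𝕜 f)
    (z : Fin L → 𝕜)
    (h : EuclideanSpace 𝕜 (Fin d))
    (hhf : ∀ l, ⟪h, f l⟫_𝕜 = 0)
    (F H : Matrix (Fin d) (Fin L) 𝕜)
    (hF : F = Matrix.of fun i l => f l i)
    (hH : H = Matrix.of fun i l => z l * h i) :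
    HasDerivAt (fun t : ℝ => Pmat f z h t) (H * Fᴴ + F * Hᴴ) 0 := by
  have hA : HasDerivAt (Amat f z h) H 0 := hH ▸ hasDerivAt_Amat_zero f z h
  have hA0 : Amat f z h 0 = F := hF ▸ Amat_zero f z h
  have hFF : Fᴴ * F = 1 := by
    rw [hF, conjTranspose_mul_eq_inner]
    exact Matrix.gram_eq_one_iff_orthonormal.mpr hf
  have hFH : Fᴴ * H = 0 := by
    have hH' : H = Matrix.of fun i m => (z m • h) i := by simp [hH]
    rw [hF, hH', conjTranspose_mul_eq_inner]
    ext l m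
    simp [inner_smul_right, ← inner_conj_symm (f l), hhf]
  have hgram : HasDerivAt (fun s => (Amat f z h s)ᴴ * Amat f z h s) 0 0 := by
    have := hA.matrix_conjTranspose.matrix_mul hA
    rwa [hA0, hFH, ← Matrix.conjTranspose_conjTranspose F, ← Matrix.conjTranspose_mul, hFH,
      Matrix.conjTranspose_zero, add_zero] at this
  have hgram_inv := hgram.matrix_inv (by simp [hA0, hFF])
  have hP := (hA.matrix_mul hgram_inv).matrix_mul hA.matrix_conjTranspose
  rw [hA0, hFF, inv_one] at hP
  convert hP using 1
  · rfl
  · simp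

/-- the curve `t ↦ P(t)` is differentiable at `t = 0` with
derivative `P′(0) = H F* + F H*`, where `F` has columns `f_l` and `H` has
columns `z_l h`. -/
theorem stmt6 {𝕜 : Type*} [RCLike 𝕜] {d L : ℕ}
    (f : Fin L → EuclideanSpace 𝕜 (Fin d)) (hf : Orthonormal 𝕜 f)
    (z : Fin L → 𝕜) (hz : ∀ l, ‖z l‖ ≤ 1 / 2)
    (h : EuclideanSpace 𝕜 (Fin d)) (hh : ‖h‖ = 1)
    (hhf : ∀ l, ⟪h, f l⟫_𝕜 = 0)
    (F H : Matrix (Fin d) (Fin L) 𝕜)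
    (hF : F = Matrix.of fun i l => f l i)
    (hH : H = Matrix.of fun i l => z l * h i) :
    HasDerivAt (fun t : ℝ => Pmat f z h t) (H * Fᴴ + F * Hᴴ) 0 :=
  stmt6_general f hf z h hhf F H hF hH
end

section
/- Let d, K ∈ ℕ with K ≥ 1, let L_1,…,L_K ∈ ℕ satisfy d ≤ Σ_{k=1}^K L_k, and let c_1 ≥ c_2 ≥ … ≥ c_K > 0 be a decreasing sequence of positive reals. Then there exists a unique index N_0 with 1 ≤ N_0 ≤ K such that (d − Σ_{k=1}^j L_k)·c_j > Σ_{k=j+1}^K L_k c_k for all j with 1 ≤ j < N_0, while (d − Σ_{k=1}^j L_k)·c_j ≤ Σ_{k=j+1}^K L_k c_k for all j with N_0 ≤ j ≤ K. -/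
open scoped BigOperators

/-- for `d ≤ Σ_{k=1}^K L_k` and a decreasing positive sequence
`c_1 ≥ … ≥ c_K > 0`, there is a unique index `N₀ ∈ {1,…,K}` such that
`(d − Σ_{k≤j} L_k)·c_j > Σ_{k>j} L_k c_k` for `1 ≤ j < N₀` and
`(d − Σ_{k≤j} L_k)·c_j ≤ Σ_{k>j} L_k c_k` for `N₀ ≤ j ≤ K`. -/
theorem stmt10 (d K : ℕ) (hK : 1 ≤ K) (L : ℕ → ℕ) (c : ℕ → ℝ)
    (hc_pos : ∀ k, 1 ≤ k → k ≤ K → 0 < c k)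
    (hc_dec : ∀ j k, 1 ≤ j → j ≤ k → k ≤ K → c k ≤ c j)
    (hd : d ≤ ∑ k ∈ Finset.Icc 1 K, L k) :
    ∃! N₀ : ℕ, 1 ≤ N₀ ∧ N₀ ≤ K ∧
      (∀ j, 1 ≤ j → j < N₀ →
        ((d : ℝ) - ∑ k ∈ Finset.Icc 1 j, (L k : ℝ)) * c j >
          ∑ k ∈ Finset.Icc (j + 1) K, (L k : ℝ) * c k) ∧
      (∀ j, N₀ ≤ j → j ≤ K →
        ((d : ℝ) - ∑ k ∈ Finset.Icc 1 j, (L k : ℝ)) * c j ≤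
          ∑ k ∈ Finset.Icc (j + 1) K, (L k : ℝ) * c k) := by
  set P : ℕ → Prop := fun j =>
    ((d : ℝ) - ∑ k ∈ Finset.Icc 1 j, (L k : ℝ)) * c j ≤
      ∑ k ∈ Finset.Icc (j + 1) K, (L k : ℝ) * c k with hP
  have Tnonneg : ∀ j, 0 ≤ ∑ k ∈ Finset.Icc (j + 1) K, (L k : ℝ) * c k := by
    intro j
    apply Finset.sum_nonneg
    intro k hk
    simp only [Finset.mem_Icc] at hk
    exact mul_nonneg (Nat.cast_nonneg _) (hc_pos k (by omega) hk.2).le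
  have hPK : P K := by
    have h1 : (Finset.Icc (K + 1) K) = ∅ := by rw [Finset.Icc_eq_empty]; omega
    have h2 : ((d : ℝ) - ∑ k ∈ Finset.Icc 1 K, (L k : ℝ)) ≤ 0 := by
      have : (d : ℝ) ≤ ∑ k ∈ Finset.Icc 1 K, (L k : ℝ) := by exact_mod_cast hd
      linarith
    simp only [hP, h1, Finset.sum_empty]
    exact mul_nonpos_iff.mpr (Or.inr ⟨h2, (hc_pos K hK le_rfl).le⟩)
  have step : ∀ j, 1 ≤ j → j < K → P j → P (j + 1) := by
    intro j h1 h2 hPj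
    simp only [hP] at hPj ⊢
    have hS : ∑ k ∈ Finset.Icc 1 (j + 1), (L k : ℝ)
        = (∑ k ∈ Finset.Icc 1 j, (L k : ℝ)) + L (j + 1) :=
      Finset.sum_Icc_succ_top (by omega) _
    have hins : Finset.Icc (j + 1) K = insert (j + 1) (Finset.Icc (j + 2) K) := by
      ext x; simp only [Finset.mem_Icc, Finset.mem_insert]; omega
    have hT : ∑ k ∈ Finset.Icc (j + 1) K, (L k : ℝ) * c k
        = (L (j + 1) : ℝ) * c (j + 1) + ∑ k ∈ Finset.Icc (j + 2) K, (L k : ℝ) * c k := by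
      rw [hins, Finset.sum_insert (by simp only [Finset.mem_Icc]; omega)]
    rw [hT] at hPj
    rw [hS]
    have hc1 : 0 < c (j + 1) := hc_pos _ (by omega) (by omega)
    rcases le_or_gt ((d : ℝ) - ∑ k ∈ Finset.Icc 1 j, (L k : ℝ)) 0 with h | h
    · have hT2 := Tnonneg (j + 1)
      have hL : (0 : ℝ) ≤ (L (j + 1) : ℝ) := Nat.cast_nonneg _
      nlinarith
    · have hcc : c (j + 1) ≤ c j := hc_dec j (j + 1) h1 (by omega) (by omega)
      have hmul : ((d : ℝ) - ∑ k ∈ Finset.Icc 1 j, (L k : ℝ)) * c (j + 1)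
          ≤ ((d : ℝ) - ∑ k ∈ Finset.Icc 1 j, (L k : ℝ)) * c j :=
        mul_le_mul_of_nonneg_left hcc h.le
      linarith
  have hQ : ∃ n, 1 ≤ n ∧ P n := ⟨K, hK, hPK⟩
  classical
  set N₀ := Nat.find hQ with hN₀
  obtain ⟨hN1, hPN⟩ := Nat.find_spec hQ
  have hNK : N₀ ≤ K := Nat.find_min' hQ ⟨hK, hPK⟩
  have mono : ∀ j, N₀ ≤ j → j ≤ K → P j := by
    intro j hj
    induction j, hj using Nat.le_induction with
    | base => intro _; exact hPN
    | succ j hj ih =>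
      intro hjK
      exact step j (le_trans hN1 hj) (by omega) (ih (by omega))
  refine ⟨N₀, ⟨hN1, hNK, ?_, ?_⟩, ?_⟩
  · intro j h1 h2
    have hnot : ¬(1 ≤ j ∧ P j) := Nat.find_min hQ h2
    have : ¬ P j := fun hp => hnot ⟨h1, hp⟩
    exact lt_of_not_ge this
  · intro j hj hjK
    exact mono j hj hjK
  · rintro N ⟨hN1', hNK', hlt, hle⟩
    have hPN' : P N := hle N le_rfl hNK'
    by_contra hne
    rcases lt_or_gt_of_ne hne with h | h
    · exact absurd ⟨hN1', hPN'⟩ (Nat.find_min hQ h)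
    · have := hlt N₀ hN1 h
      exact absurd hPN (not_le.mpr this)
end
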